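/- arXiv:math/0609843 — 4 statements merged into one kernel-verified Lean document; each statement's English description precedes it below -/
import Mathlib

section
/- For every basis Δ of Φ and every admissible subset Y ⊆ Δ, the face F_Y^Δ is a non-empty convex subset of A. -/
/-!
Common setup for Werner, "Compactifications of Bruhat-Tits buildings associated to
linear representations":  a finite-dimensional real vector space `A` (the apartment),
a root system `Φ` in the dual space together with a Weyl-group invariant inner
product, a finite Weyl-invariant set `Λ` of (K-)weights, and for every basis `Δ`
of `Φ` a highest weight `lam0 Δ ∈ Λ`.
-/

open Pointwise Filter Topology Bornology
open scoped Classical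

noncomputable section

/-- A set `M` of linear forms is *connected* if the graph with vertex set `M` and an
edge between `m` and `n` iff `inn m n ≠ 0` is connected. -/
def GraphConnected {D : Type*} (inn : D → D → ℝ) (M : Set D) : Prop :=
  ∀ m ∈ M, ∀ n ∈ M,
    Relation.ReflTransGen (fun x y => x ∈ M ∧ y ∈ M ∧ inn x y ≠ 0) m n

/-- The coefficients of `μ` as a linear combination of the elements of `Δ` (chosen
arbitrarily if one exists; it is unique when `Δ` is linearly independent). -/
noncomputable def coeffs {A : Type*} [AddCommGroup A] [Module ℝ A]
    (Δ : Finset (Module.Dual ℝ A)) (μ : Module.Dual ℝ A) : Module.Dual ℝ A → ℝ :=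
  if h : ∃ n : Module.Dual ℝ A → ℝ, μ = ∑ b ∈ Δ, n b • b then h.choose else fun _ => 0

/-- The support `[μ]` of `μ` with respect to the basis `Δ`: the set of elements of `Δ`
whose coefficient in `μ` is nonzero. -/
noncomputable def supp {A : Type*} [AddCommGroup A] [Module ℝ A]
    (Δ : Finset (Module.Dual ℝ A)) (μ : Module.Dual ℝ A) : Finset (Module.Dual ℝ A) :=
  Δ.filter fun a => coeffs Δ μ a ≠ 0

/-- Raw data: a finite set `Φ` of roots in the dual of `A`, a product `inn` on the dual,
a finite set `Λ` of weights, and a highest weight `lam0 Δ` for every basis `Δ`. -/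
structure RootWeightData (A : Type*) [NormedAddCommGroup A] [NormedSpace ℝ A]
    [FiniteDimensional ℝ A] where
  Φ : Finset (Module.Dual ℝ A)
  inn : Module.Dual ℝ A → Module.Dual ℝ A → ℝ
  Λ : Finset (Module.Dual ℝ A)
  lam0 : Finset (Module.Dual ℝ A) → Module.Dual ℝ A

namespace RootWeightData

variable {A : Type*} [NormedAddCommGroup A] [NormedSpace ℝ A] [FiniteDimensional ℝ A]
variable (S : RootWeightData A)

/-- The reflection associated to the root `a`. -/
def refl (a : Module.Dual ℝ A) : Function.End (Module.Dual ℝ A) :=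
  fun x => x - (2 * S.inn x a / S.inn a a) • a

/-- The Weyl group `W`, generated by the reflections in the roots. -/
def weyl : Submonoid (Function.End (Module.Dual ℝ A)) :=
  Submonoid.closure {f | ∃ a ∈ S.Φ, f = S.refl a}

/-- `Δ` is a basis of the root system `Φ`: a linearly independent subset of `Φ` such
that every root is a nonnegative or nonpositive linear combination of `Δ`. -/
def IsBase (Δ : Finset (Module.Dual ℝ A)) : Prop :=
  (↑Δ : Set (Module.Dual ℝ A)) ⊆ (S.Φ : Set (Module.Dual ℝ A)) ∧
  LinearIndependent ℝ (fun a : (Δ : Set (Module.Dual ℝ A)) => (a : Module.Dual ℝ A)) ∧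
  ∀ a ∈ S.Φ,
    (∃ n : Module.Dual ℝ A → ℝ, (∀ b ∈ Δ, 0 ≤ n b) ∧ a = ∑ b ∈ Δ, n b • b) ∨
    (∃ n : Module.Dual ℝ A → ℝ, (∀ b ∈ Δ, 0 ≤ n b) ∧ a = -∑ b ∈ Δ, n b • b)

/-- `Y` is an admissible subset of the basis `Δ`: `Y ⊆ Δ` and `Y ∪ {λ₀(Δ)}` is
connected. -/
def Admissible (Δ Y : Finset (Module.Dual ℝ A)) : Prop :=
  Y ⊆ Δ ∧ GraphConnected S.inn ((↑Y : Set (Module.Dual ℝ A)) ∪ {S.lam0 Δ})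

end RootWeightData

/-- The whole setting of Werner's paper: the data of `RootWeightData`, where `Φ` is a
(crystallographic, possibly non-reduced) root system spanning the dual of `A`, `inn` is
a Weyl-invariant inner product, `Λ` is a finite Weyl-invariant set of weights, and
`lam0` picks, Weyl-equivariantly, a highest weight for each basis, dominating all of
`Λ`; moreover a subset of a basis is admissible iff it is the support of
`λ₀(Δ) - λ` for some weight `λ`. -/
structure RootWeightSystem (A : Type*) [NormedAddCommGroup A] [NormedSpace ℝ A]
    [FiniteDimensional ℝ A] extends RootWeightData A where
  inn_symm : ∀ x y, inn x y = inn y x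
  inn_add_left : ∀ x y z, inn (x + y) z = inn x z + inn y z
  inn_smul_left : ∀ (c : ℝ) (x y), inn (c • x) y = c * inn x y
  inn_pos : ∀ x, x ≠ 0 → 0 < inn x x
  root_ne_zero : ∀ a ∈ Φ, a ≠ (0 : Module.Dual ℝ A)
  neg_mem : ∀ a ∈ Φ, -a ∈ Φ
  refl_mem : ∀ a ∈ Φ, ∀ b ∈ Φ, toRootWeightData.refl a b ∈ Φ
  inn_weyl_invariant :
    ∀ w ∈ toRootWeightData.weyl, ∀ x y, inn (w x) (w y) = inn x y
  phi_spans : Submodule.span ℝ (Φ : Set (Module.Dual ℝ A)) = ⊤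
  exists_base : ∃ Δ, toRootWeightData.IsBase Δ
  base_cover : ∀ x : A, ∃ Δ, toRootWeightData.IsBase Δ ∧ ∀ a ∈ Δ, 0 ≤ a x
  base_weyl : ∀ w ∈ toRootWeightData.weyl, ∀ Δ, toRootWeightData.IsBase Δ →
    toRootWeightData.IsBase (Δ.image (w : Module.Dual ℝ A → Module.Dual ℝ A))
  lam0_mem : ∀ Δ, toRootWeightData.IsBase Δ → lam0 Δ ∈ Λ
  lam0_dominates : ∀ Δ, toRootWeightData.IsBase Δ → ∀ l ∈ Λ,
    ∃ n : Module.Dual ℝ A → ℝ, (∀ a ∈ Δ, 0 ≤ n a) ∧ lam0 Δ - l = ∑ a ∈ Δ, n a • a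
  weight_weyl_invariant : ∀ w ∈ toRootWeightData.weyl, ∀ l ∈ Λ, w l ∈ Λ
  lam0_equivariant : ∀ w ∈ toRootWeightData.weyl, ∀ Δ, toRootWeightData.IsBase Δ →
    lam0 (Δ.image (w : Module.Dual ℝ A → Module.Dual ℝ A)) = w (lam0 Δ)
  integrality : ∀ l ∈ Λ, ∀ a ∈ Φ, ∃ k : ℤ, 2 * inn l a / inn a a = (k : ℝ)
  admissible_iff_support : ∀ Δ, toRootWeightData.IsBase Δ → ∀ Y ⊆ Δ,
    (toRootWeightData.Admissible Δ Y ↔ ∃ l ∈ Λ, supp Δ (lam0 Δ - l) = Y)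

namespace RootWeightSystem

variable {A : Type*} [NormedAddCommGroup A] [NormedSpace ℝ A] [FiniteDimensional ℝ A]
variable (S : RootWeightSystem A)

/-- The face `F_Y^Δ` of the apartment `A` associated to a basis `Δ` and an admissible
subset `Y ⊆ Δ`. -/
def Face (Δ Y : Finset (Module.Dual ℝ A)) : Set A :=
  {x | (∀ a ∈ Y, a x = 0) ∧
    ∀ l ∈ S.Λ, ¬ supp Δ (S.lam0 Δ - l) ⊆ Y → 0 < (S.lam0 Δ - l) x}

/-- `F` belongs to the collection `Σ` of faces. -/
def IsFace (F : Set A) : Prop :=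
  ∃ Δ Y, S.toRootWeightData.IsBase Δ ∧ S.toRootWeightData.Admissible Δ Y ∧
    F = S.Face Δ Y

/-- The collection `Σ` of all faces. -/
def Faces : Type _ := {F : Set A // S.IsFace F}

/-- The relation identifying `(F, u)` and `(F, v)` when `u - v ∈ ⟨F⟩`; the quotient is
the disjoint union `Ā = ⊔_{F ∈ Σ} A/⟨F⟩`. -/
def AbarRel (p q : S.Faces × A) : Prop :=
  p.1 = q.1 ∧ p.2 - q.2 ∈ Submodule.span ℝ p.1.val

/-- The compactified apartment `Ā = ⊔_{F ∈ Σ} A_F`, `A_F = A/⟨F⟩`. -/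
def Abar : Type _ := Quot S.AbarRel

/-- `r_F(u)`, the image of `u ∈ A` in the stratum `A_F` of `Ā`. -/
def mkAbar (F : S.Faces) (u : A) : S.Abar := Quot.mk _ (F, u)

/-- The basic set `Γ_F(U) = ⋃_{F' ⊆ cl F} r_{F'}(U + F)` of `Ā`. -/
def Gamma (F : S.Faces) (U : Set A) : Set S.Abar :=
  {p | ∃ F' : S.Faces, F'.val ⊆ closure F.val ∧ ∃ u ∈ U + F.val, p = S.mkAbar F' u}

/-- The topology of `Ā`, generated by the sets `Γ_F(U)` for `F ∈ Σ` and `U ⊆ A`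
bounded and open. -/
instance : TopologicalSpace S.Abar :=
  TopologicalSpace.generateFrom
    {V : Set S.Abar | ∃ (F : S.Faces) (U : Set A),
      IsOpen U ∧ IsBounded U ∧ V = S.Gamma F U}

/-- `f_Ω(a) = inf {t : Ω ⊆ cl_Ā {z ∈ A : a(z) ≥ -t}} ∈ ℝ ∪ {±∞}`, where `A` is embedded
in `Ā` as the stratum of the face `F₀ = {0}`. -/
def fOmega (F₀ : S.Faces) (Ω : Set S.Abar) (a : Module.Dual ℝ A) : EReal :=
  sInf ((fun t : ℝ => (t : EReal)) ''
    {t : ℝ | Ω ⊆ closure (S.mkAbar F₀ '' {z : A | -t ≤ a z})})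

end RootWeightSystem

/-!
Since `Δ` is linearly independent, there is a point `x` with `a x = 0` for `a ∈ Y` and
`a x = 1` for `a ∈ Δ \ Y`. Each `λ₀(Δ) - λ` is a nonnegative combination of `Δ`, so its
value at `x` is the sum of its coefficients outside `Y`, which is positive as soon as its
support leaves `Y`; hence `x` lies in the face. Convexity holds because the face is cut
out by linear equations and strict linear inequalities.
-/

theorem LinearIndependent.exists_forall_apply_eq {ι K V : Type*} [Field K] [AddCommGroup V]
    [Module K V] [FiniteDimensional K V] {f : ι → Module.Dual K V}
    (hf : LinearIndependent K f) (c : ι → K) : ∃ x : V, ∀ i, f i x = c i := by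
  obtain ⟨φ, hφ⟩ := LinearMap.dualMap_surjective_of_injective hf (Finsupp.linearCombination K c)
  refine ⟨(Module.evalEquiv K V).symm φ, fun i => ?_⟩
  simpa [Module.apply_evalEquiv_symm_apply] using congr($hφ (Finsupp.single i 1))

theorem coeffs_sum_smul {M : Type*} [AddCommGroup M] [Module ℝ M]
    {Δ : Finset (Module.Dual ℝ M)} (hΔ : LinearIndepOn ℝ id (Δ : Set (Module.Dual ℝ M)))
    (n : Module.Dual ℝ M → ℝ) {b : Module.Dual ℝ M} (hb : b ∈ Δ) :
    coeffs Δ (∑ a ∈ Δ, n a • a) b = n b := by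
  have hex : ∃ m : Module.Dual ℝ M → ℝ, ∑ a ∈ Δ, n a • a = ∑ a ∈ Δ, m a • a := ⟨n, rfl⟩
  rw [coeffs, dif_pos hex]
  exact linearIndepOn_finset_iffₛ.mp hΔ _ _ hex.choose_spec.symm b hb

theorem supp_sum_smul {M : Type*} [AddCommGroup M] [Module ℝ M]
    {Δ : Finset (Module.Dual ℝ M)} (hΔ : LinearIndepOn ℝ id (Δ : Set (Module.Dual ℝ M)))
    (n : Module.Dual ℝ M → ℝ) :
    supp Δ (∑ a ∈ Δ, n a • a) = Δ.filter fun a => n a ≠ 0 :=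
  Finset.filter_congr fun _ hb => by rw [coeffs_sum_smul hΔ n hb]

theorem sum_smul_apply_pos {M : Type*} [AddCommGroup M] [Module ℝ M]
    {Δ : Finset (Module.Dual ℝ M)} {n : Module.Dual ℝ M → ℝ} {x : M}
    (hn : ∀ a ∈ Δ, 0 ≤ n a) (hx : ∀ a ∈ Δ, 0 ≤ a x) {b : Module.Dual ℝ M} (hb : b ∈ Δ)
    (hnb : n b ≠ 0) (hbx : 0 < b x) : 0 < (∑ a ∈ Δ, n a • a) x := by
  simp only [LinearMap.sum_apply, LinearMap.smul_apply, smul_eq_mul]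
  exact Finset.sum_pos' (fun a ha => mul_nonneg (hn a ha) (hx a ha))
    ⟨b, hb, mul_pos ((hn b hb).lt_of_ne' hnb) hbx⟩

namespace RootWeightSystem

variable {A : Type*} [NormedAddCommGroup A] [NormedSpace ℝ A] [FiniteDimensional ℝ A]
variable (S : RootWeightSystem A)

theorem convex_face (Δ Y : Finset (Module.Dual ℝ A)) : Convex ℝ (S.Face Δ Y) := by
  have hface : S.Face Δ Y = (⋂ a ∈ Y, {x | a x = 0}) ∩
      ⋂ l ∈ S.Λ, ⋂ (_ : ¬ supp Δ (S.lam0 Δ - l) ⊆ Y), {x | 0 < (S.lam0 Δ - l) x} := by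
    ext x
    simp [Face]
  rw [hface]
  exact (convex_iInter₂ fun a _ => convex_hyperplane a.isLinear 0).inter
    (convex_iInter₂ fun l _ => convex_iInter fun _ => convex_halfSpace_gt (S.lam0 Δ - l).isLinear 0)

theorem face_nonempty {Δ Y : Finset (Module.Dual ℝ A)} (hΔ : S.toRootWeightData.IsBase Δ)
    (hYΔ : Y ⊆ Δ) : (S.Face Δ Y).Nonempty := by
  obtain ⟨x, hx⟩ :=
    hΔ.2.1.exists_forall_apply_eq fun a => if (a : Module.Dual ℝ A) ∈ Y then 0 else 1
  have hxΔ : ∀ a ∈ Δ, a x = if a ∈ Y then 0 else 1 := fun a ha => hx ⟨a, ha⟩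
  refine ⟨x, fun a ha => by simp [hxΔ a (hYΔ ha), ha], fun l hl hsupp => ?_⟩
  obtain ⟨n, hn, hsum⟩ := S.lam0_dominates Δ hΔ l hl
  rw [hsum, supp_sum_smul hΔ.2.1] at hsupp
  obtain ⟨b, hb, hbY⟩ := Finset.not_subset.mp hsupp
  rw [Finset.mem_filter] at hb
  rw [hsum]
  exact sum_smul_apply_pos hn (fun a ha => by rw [hxΔ a ha]; split_ifs <;> norm_num) hb.1 hb.2
    (by simp [hxΔ b hb.1, hbY])

end RootWeightSystem

variable {A : Type*} [NormedAddCommGroup A] [NormedSpace ℝ A] [FiniteDimensional ℝ A]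

/-- For every basis `Δ` of `Φ` and every admissible subset `Y ⊆ Δ`,
the face `F_Y^Δ` is a non-empty convex subset of `A`. -/
theorem face_nonempty_and_convex (S : RootWeightSystem A)
    (Δ Y : Finset (Module.Dual ℝ A))
    (hΔ : S.toRootWeightData.IsBase Δ) (hY : S.toRootWeightData.Admissible Δ Y) :
    (S.Face Δ Y).Nonempty ∧ Convex ℝ (S.Face Δ Y) :=
  ⟨S.face_nonempty hΔ hY.1, S.convex_face Δ Y⟩
end
end

section
/- For bases Δ and Δ' of Φ and admissible subsets Y ⊆ Δ and Y' ⊆ Δ', the faces F_Y^Δ and F_{Y'}^{Δ'} are either equal or disjoint. -/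
/-!
Common setup for Werner, "Compactifications of Bruhat-Tits buildings associated to
linear representations":  a finite-dimensional real vector space `A` (the apartment),
a root system `Φ` in the dual space together with a Weyl-group invariant inner
product, a finite Weyl-invariant set `Λ` of (K-)weights, and for every basis `Δ`
of `Φ` a highest weight `lam0 Δ ∈ Λ`.
-/

open Pointwise Filter Topology Bornology
open scoped Classical

noncomputable section

variable {A : Type*} [NormedAddCommGroup A] [NormedSpace ℝ A] [FiniteDimensional ℝ A]

/-!
At a point `x` of `F_Y^Δ`, the forms `λ₀(Δ) - λ` (`λ ∈ Λ`) vanish exactly when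
`[λ₀(Δ) - λ] ⊆ Y` and are positive otherwise, so the weights `λ ∈ Λ` at which
`λ ↦ λ(x)` is maximal are exactly those with `[λ₀(Δ) - λ] ⊆ Y`. Conversely this set of
maximal weights pins down membership in `F_Y^Δ`. Hence every face is a fibre of the map
`x ↦ {λ ∈ Λ : λ(x) maximal}`, and two fibres are equal or disjoint.

The converse needs that `x` is killed by every `a ∈ Y` once all `λ₀(Δ) - λ` with support
in `Y` vanish at `x`. Take a maximal admissible `Z ⊆ Y` killing `x`. If `Z ≠ Y`, the
connectedness of `Y ∪ {λ₀(Δ)}` gives `c ∈ Y \ Z` with `Z ∪ {c}` admissible, hence the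
support of some `λ₀(Δ) - λ`; evaluating that form at `x` leaves only its `c`-term, so
`c(x) = 0`, contradicting maximality.
-/

namespace GraphConnected

variable {D : Type*} {inn : D → D → ℝ} {M : Set D}

lemma exists_edge_of_subset {N : Set D} (hM : GraphConnected inn M) (hNM : N ⊆ M)
    {p q : D} (hp : p ∈ N) (hq : q ∈ M) (hqN : q ∉ N) :
    ∃ u ∈ N, ∃ v ∈ M, v ∉ N ∧ inn u v ≠ 0 := by
  induction hM p (hNM hp) q hq with
  | refl => exact absurd hp hqN
  | @tail b c _ hbc ih =>
    by_cases hb : b ∈ N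
    · exact ⟨b, hb, c, hbc.2.1, hqN, hbc.2.2⟩
    · exact ih hbc.1 hb

end GraphConnected

lemma graphConnected_singleton {D : Type*} (inn : D → D → ℝ) (p : D) :
    GraphConnected inn {p} := by
  rintro m rfl n rfl
  exact .refl

lemma graphConnected_insert {D : Type*} {inn : D → D → ℝ} {M : Set D}
    (hsymm : ∀ x y, inn x y = inn y x) (hM : GraphConnected inn M) {m c : D} (hm : m ∈ M)
    (hmc : inn m c ≠ 0) : GraphConnected inn (insert c M) := by
  have lift : ∀ {p q}, p ∈ M → q ∈ M →
      Relation.ReflTransGen (fun x y => x ∈ insert c M ∧ y ∈ insert c M ∧ inn x y ≠ 0) p q :=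
    fun hp hq => Relation.ReflTransGen.mono (fun x y ⟨hx, hy, h⟩ => ⟨Or.inr hx, Or.inr hy, h⟩) _ _
      (hM _ hp _ hq)
  rintro p (rfl | hp) q (rfl | hq)
  · exact .refl
  · exact .head ⟨Or.inl rfl, Or.inr hm, hsymm m p ▸ hmc⟩ (lift hm hq)
  · exact .tail (lift hp hm) ⟨Or.inr hm, Or.inl rfl, hmc⟩
  · exact lift hp hq

section Coefficients

variable {E : Type*} [AddCommGroup E] [Module ℝ E] {Δ : Finset (Module.Dual ℝ E)}
  {μ : Module.Dual ℝ E}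

lemma eq_sum_coeffs (h : ∃ n : Module.Dual ℝ E → ℝ, μ = ∑ b ∈ Δ, n b • b) :
    μ = ∑ b ∈ Δ, coeffs Δ μ b • b := by
  rw [coeffs, dif_pos h]
  exact h.choose_spec

lemma apply_eq_sum_supp (h : ∃ n : Module.Dual ℝ E → ℝ, μ = ∑ b ∈ Δ, n b • b) (x : E) :
    μ x = ∑ a ∈ supp Δ μ, coeffs Δ μ a * a x := by
  conv_lhs => rw [eq_sum_coeffs h]
  rw [supp, Finset.sum_filter_of_ne fun a _ ha => left_ne_zero_of_mul ha]
  simp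

lemma apply_eq_zero_of_forall_supp (h : ∃ n : Module.Dual ℝ E → ℝ, μ = ∑ b ∈ Δ, n b • b)
    {x : E} (hx : ∀ a ∈ supp Δ μ, a x = 0) : μ x = 0 := by
  rw [apply_eq_sum_supp h]
  exact Finset.sum_eq_zero fun a ha => by rw [hx a ha, mul_zero]

lemma apply_eq_zero_of_supp_eq_insert (h : ∃ n : Module.Dual ℝ E → ℝ, μ = ∑ b ∈ Δ, n b • b)
    {Z : Finset (Module.Dual ℝ E)} {c : Module.Dual ℝ E} {x : E}
    (hsupp : supp Δ μ = insert c Z) (hZ : ∀ a ∈ Z, a x = 0) (hμ : μ x = 0) : c x = 0 := by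
  have hc : c ∈ supp Δ μ := hsupp ▸ Finset.mem_insert_self c Z
  rw [apply_eq_sum_supp h, Finset.sum_eq_single_of_mem c hc fun a ha hac => ?_] at hμ
  · exact (mul_eq_zero.1 hμ).resolve_left (Finset.mem_filter.1 hc).2
  · rw [hsupp, Finset.mem_insert] at ha
    rw [hZ a (ha.resolve_left hac), mul_zero]

lemma supp_zero
    (hΔ : LinearIndependent ℝ (fun a : (Δ : Set (Module.Dual ℝ E)) => (a : Module.Dual ℝ E))) :
    supp Δ 0 = ∅ := by
  have h := eq_sum_coeffs (Δ := Δ) (μ := 0) ⟨0, by simp⟩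
  have hli : LinearIndepOn ℝ id (Δ : Set (Module.Dual ℝ E)) := hΔ
  refine Finset.filter_false_of_mem fun b hb => not_not.2 ?_
  exact linearIndepOn_finset_iff.1 hli (coeffs Δ 0) (by simpa using h.symm) b hb

end Coefficients

section MaxWeights

variable {E : Type*} [AddCommGroup E] [Module ℝ E]

def maxWeights (Λ : Finset (Module.Dual ℝ E)) (x : E) : Finset (Module.Dual ℝ E) :=
  Λ.filter fun l => ∀ m ∈ Λ, m x ≤ l x

lemma mem_maxWeights_iff {Λ : Finset (Module.Dual ℝ E)} {x : E} {p l : Module.Dual ℝ E}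
    (hp : p ∈ Λ) (hmax : ∀ m ∈ Λ, m x ≤ p x) : l ∈ maxWeights Λ x ↔ l ∈ Λ ∧ l x = p x := by
  rw [maxWeights, Finset.mem_filter]
  refine and_congr_right fun hl => ⟨fun h => le_antisymm (hmax l hl) (h p hp), ?_⟩
  intro h m hm
  exact h ▸ hmax m hm

end MaxWeights

namespace RootWeightSystem

variable (S : RootWeightSystem A) {Δ Y Z : Finset (Module.Dual ℝ A)}

lemma exists_lam0_sub_eq_sum (hΔ : S.IsBase Δ) {l : Module.Dual ℝ A} (hl : l ∈ S.Λ) :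
    ∃ n : Module.Dual ℝ A → ℝ, S.lam0 Δ - l = ∑ a ∈ Δ, n a • a :=
  (S.lam0_dominates Δ hΔ l hl).imp fun _ h => h.2

lemma admissible_empty : S.Admissible Δ ∅ :=
  ⟨Finset.empty_subset Δ, by simpa using graphConnected_singleton S.inn (S.lam0 Δ)⟩

lemma exists_admissible_insert (hY : S.Admissible Δ Y) (hZ : S.Admissible Δ Z) (hZY : Z ⊆ Y)
    {a : Module.Dual ℝ A} (haY : a ∈ Y) (haZ : a ∉ Z) :
    ∃ c ∈ Y, c ∉ Z ∧ S.Admissible Δ (insert c Z) := by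
  by_cases ha : a = S.lam0 Δ
  · refine ⟨a, haY, haZ, Finset.insert_subset (hY.1 haY) hZ.1, ?_⟩
    simpa [ha, Set.insert_union] using hZ.2
  obtain ⟨m, hm, c, hc, hcZ, hmc⟩ := hY.2.exists_edge_of_subset
    (Set.union_subset_union_left _ (Finset.coe_subset.2 hZY)) (Or.inr rfl) (Or.inl haY)
    (by simp [haZ, ha])
  have hcY : c ∈ Y := hc.resolve_right fun h => hcZ (Or.inr h)
  refine ⟨c, hcY, fun h => hcZ (Or.inl h), Finset.insert_subset (hY.1 hcY) hZ.1, ?_⟩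
  rw [Finset.coe_insert, Set.insert_union]
  exact graphConnected_insert S.inn_symm hZ.2 hm hmc

lemma forall_apply_eq_zero_of_admissible (hΔ : S.IsBase Δ) (hY : S.Admissible Δ Y) {x : A}
    (hx : ∀ l ∈ S.Λ, supp Δ (S.lam0 Δ - l) ⊆ Y → (S.lam0 Δ - l) x = 0) :
    ∀ a ∈ Y, a x = 0 := by
  obtain ⟨Z, hZmem, hZmax⟩ :=
    (Y.powerset.filter fun Z => S.Admissible Δ Z ∧ ∀ a ∈ Z, a x = 0).exists_maximal
      ⟨∅, Finset.mem_filter.2 ⟨Finset.empty_mem_powerset Y, S.admissible_empty, by simp⟩⟩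
  obtain ⟨hZY, hZ, hZx⟩ : Z ⊆ Y ∧ S.Admissible Δ Z ∧ ∀ a ∈ Z, a x = 0 := by
    simpa using hZmem
  suffices Y ⊆ Z from fun a ha => hZx a (this ha)
  intro a haY
  by_contra haZ
  obtain ⟨c, hcY, hcZ, hadm⟩ := S.exists_admissible_insert hY hZ hZY haY haZ
  obtain ⟨l, hl, hsupp⟩ := (S.admissible_iff_support Δ hΔ _ hadm.1).1 hadm
  have hcx : c x = 0 := apply_eq_zero_of_supp_eq_insert (S.exists_lam0_sub_eq_sum hΔ hl) hsupp
    hZx (hx l hl (hsupp ▸ Finset.insert_subset hcY hZY))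
  refine hcZ (hZmax ?_ (Finset.subset_insert c Z) (Finset.mem_insert_self c Z))
  exact Finset.mem_filter.2 ⟨Finset.mem_powerset.2 (Finset.insert_subset hcY hZY), hadm,
    Finset.forall_mem_insert _ _ _ |>.2 ⟨hcx, hZx⟩⟩

lemma mem_face_iff (hΔ : S.IsBase Δ) (hY : S.Admissible Δ Y) {x : A} :
    x ∈ S.Face Δ Y ↔ ∀ l ∈ S.Λ, (supp Δ (S.lam0 Δ - l) ⊆ Y → (S.lam0 Δ - l) x = 0) ∧
      (¬ supp Δ (S.lam0 Δ - l) ⊆ Y → 0 < (S.lam0 Δ - l) x) := by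
  refine ⟨fun ⟨hYx, hpos⟩ l hl => ⟨fun hsub => ?_, hpos l hl⟩,
    fun h => ⟨?_, fun l hl => (h l hl).2⟩⟩
  · exact apply_eq_zero_of_forall_supp (S.exists_lam0_sub_eq_sum hΔ hl) fun a ha => hYx a (hsub ha)
  · exact S.forall_apply_eq_zero_of_admissible hΔ hY fun l hl => (h l hl).1

lemma mem_face_iff_maxWeights_eq (hΔ : S.IsBase Δ) (hY : S.Admissible Δ Y) {x : A} :
    x ∈ S.Face Δ Y ↔ maxWeights S.Λ x = S.Λ.filter fun l => supp Δ (S.lam0 Δ - l) ⊆ Y := by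
  have hlam0 := S.lam0_mem Δ hΔ
  simp only [S.mem_face_iff hΔ hY, LinearMap.sub_apply]
  constructor
  · intro h
    have hmax : ∀ m ∈ S.Λ, m x ≤ S.lam0 Δ x := fun m hm => by
      by_cases hs : supp Δ (S.lam0 Δ - m) ⊆ Y
      · linarith [(h m hm).1 hs]
      · linarith [(h m hm).2 hs]
    ext l
    rw [mem_maxWeights_iff hlam0 hmax, Finset.mem_filter]
    refine and_congr_right fun hl => ?_
    by_cases hs : supp Δ (S.lam0 Δ - l) ⊆ Y
    · simp only [hs, iff_true]
      linarith [(h l hl).1 hs]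
    · simp only [hs, iff_false]
      linarith [(h l hl).2 hs]
  · intro h
    have hmem : S.lam0 Δ ∈ maxWeights S.Λ x := by
      simp [h, hlam0, supp_zero hΔ.2.1]
    have hmax := (Finset.mem_filter.1 hmem).2
    intro l hl
    have hiff := Finset.ext_iff.1 h l
    rw [mem_maxWeights_iff hlam0 hmax, Finset.mem_filter] at hiff
    constructor
    · intro hs
      linarith [(hiff.2 ⟨hl, hs⟩).2]
    · intro hs
      have hne : l x ≠ S.lam0 Δ x := fun he => hs (hiff.1 ⟨hl, he⟩).2
      linarith [lt_of_le_of_ne (hmax l hl) hne]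

end RootWeightSystem

/-- For bases `Δ`, `Δ'` of `Φ` and admissible subsets `Y ⊆ Δ`,
`Y' ⊆ Δ'`, the faces `F_Y^Δ` and `F_{Y'}^{Δ'}` are either equal or disjoint. -/
theorem face_eq_or_disjoint (S : RootWeightSystem A)
    (Δ Δ' Y Y' : Finset (Module.Dual ℝ A))
    (hΔ : S.toRootWeightData.IsBase Δ) (hΔ' : S.toRootWeightData.IsBase Δ')
    (hY : S.toRootWeightData.Admissible Δ Y)
    (hY' : S.toRootWeightData.Admissible Δ' Y') :
    S.Face Δ Y = S.Face Δ' Y' ∨ Disjoint (S.Face Δ Y) (S.Face Δ' Y') := by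
  refine or_iff_not_imp_right.2 fun h => ?_
  obtain ⟨x, hx, hx'⟩ := Set.not_disjoint_iff.1 h
  ext y
  rw [S.mem_face_iff_maxWeights_eq hΔ hY, S.mem_face_iff_maxWeights_eq hΔ' hY',
    ← (S.mem_face_iff_maxWeights_eq hΔ hY).1 hx, ← (S.mem_face_iff_maxWeights_eq hΔ' hY').1 hx']
end
end

section
/- For every x ∈ A there exist a basis Δ of Φ and an admissible subset Y ⊆ Δ with x ∈ F_Y^Δ. Explicitly, if Δ is a basis with a(x) ≥ 0 for all a ∈ Δ and Y is the maximal admissible subset of {a ∈ Δ : a(x) = 0}, then x ∈ F_Y^Δ. Hence the faces F_Y^Δ decompose A. -/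
/-!
Common setup for Werner, "Compactifications of Bruhat-Tits buildings associated to
linear representations":  a finite-dimensional real vector space `A` (the apartment),
a root system `Φ` in the dual space together with a Weyl-group invariant inner
product, a finite Weyl-invariant set `Λ` of (K-)weights, and for every basis `Δ`
of `Φ` a highest weight `lam0 Δ ∈ Λ`.
-/

open Pointwise Filter Topology Bornology
open scoped Classical

noncomputable section

variable {A : Type*} [NormedAddCommGroup A] [NormedSpace ℝ A] [FiniteDimensional ℝ A]

/-!
Let `Δ` be a basis with `a(x) ≥ 0` for all `a ∈ Δ`. For a weight `λ`, `λ₀(Δ) - λ` is a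
nonnegative combination of `Δ`, so `(λ₀(Δ) - λ)(x) ≥ 0`, with equality exactly when every
root in the support `[λ₀(Δ) - λ]` vanishes at `x`. That support is admissible, so in the
equality case it lies in the maximal admissible subset `Y` of `{a ∈ Δ : a(x) = 0}`; hence
`(λ₀(Δ) - λ)(x) > 0` whenever `[λ₀(Δ) - λ] ⊄ Y`. Such a `Y` exists because admissible
subsets are closed under unions: each is connected through `λ₀(Δ)`.
-/

section Supp

variable {V : Type*} [AddCommGroup V] [Module ℝ V]

theorem coeffs_eq_of_linearIndependent {Δ : Finset (Module.Dual ℝ V)}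
    (hΔ : LinearIndependent ℝ (fun a : (Δ : Set (Module.Dual ℝ V)) => (a : Module.Dual ℝ V)))
    {μ : Module.Dual ℝ V} {n : Module.Dual ℝ V → ℝ} (hμ : μ = ∑ b ∈ Δ, n b • b)
    {a : Module.Dual ℝ V} (ha : a ∈ Δ) : coeffs Δ μ a = n a := by
  have hex : ∃ m : Module.Dual ℝ V → ℝ, μ = ∑ b ∈ Δ, m b • b := ⟨n, hμ⟩
  rw [coeffs, dif_pos hex]
  refine hΔ.eq_coords_of_eq (f := fun b => hex.choose b) (g := fun b => n b) ?_ ⟨a, ha⟩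
  exact (Finset.sum_coe_sort Δ _).trans
    (hex.choose_spec.symm.trans (hμ.trans (Finset.sum_coe_sort Δ _).symm))

theorem apply_eq_zero_of_mem_supp {Δ : Finset (Module.Dual ℝ V)}
    (hΔ : LinearIndependent ℝ (fun a : (Δ : Set (Module.Dual ℝ V)) => (a : Module.Dual ℝ V)))
    {μ : Module.Dual ℝ V} {n : Module.Dual ℝ V → ℝ} (hn : ∀ b ∈ Δ, 0 ≤ n b)
    (hμ : μ = ∑ b ∈ Δ, n b • b) {x : V} (hx : ∀ b ∈ Δ, 0 ≤ b x) (hμx : μ x ≤ 0)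
    {a : Module.Dual ℝ V} (ha : a ∈ supp Δ μ) : a x = 0 := by
  obtain ⟨haΔ, hna⟩ := Finset.mem_filter.mp ha
  rw [coeffs_eq_of_linearIndependent hΔ hμ haΔ] at hna
  have hterm : ∀ b ∈ Δ, 0 ≤ n b * b x := fun b hb => mul_nonneg (hn b hb) (hx b hb)
  have hsum : ∑ b ∈ Δ, n b * b x = 0 := by
    refine le_antisymm ?_ (Finset.sum_nonneg hterm)
    simpa [hμ] using hμx
  exact (mul_eq_zero.mp ((Finset.sum_eq_zero_iff_of_nonneg hterm).mp hsum a haΔ)).resolve_left hna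

end Supp

theorem GraphConnected.union {D : Type*} {inn : D → D → ℝ} {M N : Set D} {p : D}
    (hM : GraphConnected inn M) (hN : GraphConnected inn N) (hpM : p ∈ M) (hpN : p ∈ N) :
    GraphConnected inn (M ∪ N) := by
  have lift : ∀ K ⊆ M ∪ N, GraphConnected inn K → ∀ m ∈ K, ∀ n ∈ K, Relation.ReflTransGen
      (fun x y => x ∈ M ∪ N ∧ y ∈ M ∪ N ∧ inn x y ≠ 0) m n :=
    fun K hK hK' m hm n hn =>
      Relation.ReflTransGen.mono (fun _ _ hxy => ⟨hK hxy.1, hK hxy.2.1, hxy.2.2⟩) m n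
        (hK' m hm n hn)
  have via_p : ∀ m ∈ M ∪ N, Relation.ReflTransGen
      (fun x y => x ∈ M ∪ N ∧ y ∈ M ∪ N ∧ inn x y ≠ 0) m p ∧ Relation.ReflTransGen
      (fun x y => x ∈ M ∪ N ∧ y ∈ M ∪ N ∧ inn x y ≠ 0) p m := by
    rintro m (hm | hm)
    · exact ⟨lift M Set.subset_union_left hM m hm p hpM,
        lift M Set.subset_union_left hM p hpM m hm⟩
    · exact ⟨lift N Set.subset_union_right hN m hm p hpN,
        lift N Set.subset_union_right hN p hpN m hm⟩
  exact fun m hm n hn => (via_p m hm).1.trans (via_p n hn).2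

namespace RootWeightData

variable (S : RootWeightData A)

theorem admissible_empty (Δ : Finset (Module.Dual ℝ A)) : S.Admissible Δ ∅ := by
  refine ⟨Finset.empty_subset _, ?_⟩
  rintro m hm n hn
  simp only [Finset.coe_empty, Set.empty_union, Set.mem_singleton_iff] at hm hn
  rw [hm, hn]

variable {S} in
theorem Admissible.union {Δ Y Y' : Finset (Module.Dual ℝ A)} (h : S.Admissible Δ Y)
    (h' : S.Admissible Δ Y') : S.Admissible Δ (Y ∪ Y') := by
  refine ⟨Finset.union_subset h.1 h'.1, ?_⟩
  have hunion : (↑(Y ∪ Y') : Set (Module.Dual ℝ A)) ∪ {S.lam0 Δ} =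
      ((↑Y : Set (Module.Dual ℝ A)) ∪ {S.lam0 Δ}) ∪ ((↑Y' : Set _) ∪ {S.lam0 Δ}) := by
    rw [Finset.coe_union]
    exact Set.union_union_distrib_right _ _ _
  rw [hunion]
  exact h.2.union h'.2 (Or.inr rfl) (Or.inr rfl)

theorem exists_greatest_admissible_subset (Δ Z : Finset (Module.Dual ℝ A)) :
    ∃ Y ⊆ Z, S.Admissible Δ Y ∧ ∀ Y' ⊆ Z, S.Admissible Δ Y' → Y' ⊆ Y := by
  let admissibles := Z.powerset.filter (S.Admissible Δ)
  refine ⟨admissibles.sup id, Finset.sup_le fun Y' hY' => ?_, ?_, fun Y' hY'Z hY' => ?_⟩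
  · exact Finset.mem_powerset.mp (Finset.mem_filter.mp hY').1
  · exact Finset.sup_induction (S.admissible_empty Δ) (fun _ h _ h' => h.union h')
      fun Y' hY' => (Finset.mem_filter.mp hY').2
  · exact Finset.le_sup (f := id) (Finset.mem_filter.mpr ⟨Finset.mem_powerset.mpr hY'Z, hY'⟩)

end RootWeightData

namespace RootWeightSystem

variable (S : RootWeightSystem A)

theorem mem_face_of_forall_admissible_subset {x : A} {Δ Y : Finset (Module.Dual ℝ A)}
    (hΔ : S.IsBase Δ) (hx : ∀ a ∈ Δ, 0 ≤ a x) (hY : ∀ a ∈ Y, a x = 0)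
    (hmax : ∀ Y', S.Admissible Δ Y' → (∀ a ∈ Y', a x = 0) → Y' ⊆ Y) :
    x ∈ S.Face Δ Y := by
  refine ⟨hY, fun l hl hsupp => lt_of_not_ge fun hlx => hsupp (hmax _ ?_ ?_)⟩
  · exact (S.admissible_iff_support Δ hΔ _ (Finset.filter_subset _ _)).mpr ⟨l, hl, rfl⟩
  · obtain ⟨n, hn, hrep⟩ := S.lam0_dominates Δ hΔ l hl
    exact fun a ha => apply_eq_zero_of_mem_supp hΔ.2.1 hn hrep hx hlx ha

end RootWeightSystem

/-- Every `x ∈ A` lies in some face `F_Y^Δ`; explicitly, if `Δ` is a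
basis with `a(x) ≥ 0` for all `a ∈ Δ` and `Y` is the maximal admissible subset of
`{a ∈ Δ : a(x) = 0}`, then `x ∈ F_Y^Δ`.  Hence the faces `F_Y^Δ` decompose `A`. -/
theorem mem_face_of_maximal_admissible (S : RootWeightSystem A) :
    (∀ x : A, ∃ Δ Y : Finset (Module.Dual ℝ A),
      S.toRootWeightData.IsBase Δ ∧ S.toRootWeightData.Admissible Δ Y ∧
        x ∈ S.Face Δ Y) ∧
    ∀ (x : A) (Δ Y : Finset (Module.Dual ℝ A)), S.toRootWeightData.IsBase Δ →
      (∀ a ∈ Δ, 0 ≤ a x) →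
      S.toRootWeightData.Admissible Δ Y → (∀ a ∈ Y, a x = 0) →
      (∀ Y' : Finset (Module.Dual ℝ A), S.toRootWeightData.Admissible Δ Y' →
        (∀ a ∈ Y', a x = 0) → Y' ⊆ Y) →
      x ∈ S.Face Δ Y := by
  refine ⟨fun x => ?_, fun x Δ Y hΔ hx _ hY hmax =>
    S.mem_face_of_forall_admissible_subset hΔ hx hY hmax⟩
  obtain ⟨Δ, hΔ, hx⟩ := S.base_cover x
  obtain ⟨Y, hYZ, hY, hmax⟩ :=
    S.exists_greatest_admissible_subset Δ (Δ.filter fun a => a x = 0)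
  have hYx : ∀ a ∈ Y, a x = 0 := fun a ha => (Finset.mem_filter.mp (hYZ ha)).2
  refine ⟨Δ, Y, hΔ, hY, S.mem_face_of_forall_admissible_subset hΔ hx hYx fun Y' hY' hY'x => ?_⟩
  exact hmax Y' (fun a ha => Finset.mem_filter.mpr ⟨hY'.1 ha, hY'x a ha⟩) hY'
end
end

section
/- Let F₁, F₂ ∈ Σ be faces and U₁, U₂ ⊆ A bounded open sets. If the subsets U₁ + F₁ and U₂ + F₂ of A are disjoint, then Γ_{F₁}(U₁) and Γ_{F₂}(U₂) are disjoint subsets of Ā. -/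
/-!
Common setup for Werner, "Compactifications of Bruhat-Tits buildings associated to
linear representations":  a finite-dimensional real vector space `A` (the apartment),
a root system `Φ` in the dual space together with a Weyl-group invariant inner
product, a finite Weyl-invariant set `Λ` of (K-)weights, and for every basis `Δ`
of `Φ` a highest weight `lam0 Δ ∈ Λ`.
-/

open Pointwise Filter Topology Bornology
open scoped Classical

noncomputable section

variable {A : Type*} [NormedAddCommGroup A] [NormedSpace ℝ A] [FiniteDimensional ℝ A]

/-- `AbarRel` is an equivalence relation. -/
lemma abarRel_equivalence (S : RootWeightSystem A) : Equivalence S.AbarRel := by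
  constructor
  · intro p; exact ⟨rfl, by simp⟩
  · rintro p q ⟨h1, h2⟩
    refine ⟨h1.symm, ?_⟩
    rw [← h1]
    simpa using neg_mem h2
  · rintro p q r ⟨h1, h2⟩ ⟨h1', h2'⟩
    refine ⟨h1.trans h1', ?_⟩
    have := Submodule.add_mem _ h2 (h1 ▸ h2')
    simpa using this

/-- Faces are closed under addition. -/
lemma face_add_mem (S : RootWeightSystem A) (Δ Y : Finset (Module.Dual ℝ A))
    {x y : A} (hx : x ∈ S.Face Δ Y) (hy : y ∈ S.Face Δ Y) : x + y ∈ S.Face Δ Y := by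
  refine ⟨fun a ha => ?_, fun l hl hns => ?_⟩
  · rw [map_add, hx.1 a ha, hy.1 a ha, add_zero]
  · rw [map_add]
    exact add_pos (hx.2 l hl hns) (hy.2 l hl hns)

/-- Faces are closed under positive scalar multiplication. -/
lemma face_smul_mem (S : RootWeightSystem A) (Δ Y : Finset (Module.Dual ℝ A))
    {c : ℝ} (hc : 0 < c) {x : A} (hx : x ∈ S.Face Δ Y) : c • x ∈ S.Face Δ Y := by
  refine ⟨fun a ha => ?_, fun l hl hns => ?_⟩
  · rw [map_smul, hx.1 a ha, smul_zero]
  · rw [map_smul, smul_eq_mul]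
    exact mul_pos hc (hx.2 l hl hns)

/-- Adding a point of the closure of a face to a point of the face stays in the face. -/
lemma face_add_closure_mem (S : RootWeightSystem A) (Δ Y : Finset (Module.Dual ℝ A))
    {x f : A} (hx : x ∈ S.Face Δ Y) (hf : f ∈ closure (S.Face Δ Y)) :
    x + f ∈ S.Face Δ Y := by
  refine ⟨fun a ha => ?_, fun l hl hns => ?_⟩
  · have hcont : Continuous fun z : A => a z := a.continuous_of_finiteDimensional
    have hsub : closure (S.Face Δ Y) ⊆ {z : A | a z = 0} :=
      closure_minimal (fun z hz => hz.1 a ha) (isClosed_eq hcont continuous_const)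
    rw [map_add, hx.1 a ha, hsub hf, add_zero]
  · have hcont : Continuous fun z : A => (S.lam0 Δ - l) z :=
      (S.lam0 Δ - l).continuous_of_finiteDimensional
    have hsub : closure (S.Face Δ Y) ⊆ {z : A | 0 ≤ (S.lam0 Δ - l) z} :=
      closure_minimal (fun z hz => (hz.2 l hl hns).le)
        (isClosed_le continuous_const hcont)
    rw [map_add]
    have h1 := hx.2 l hl hns
    have h2 : 0 ≤ (S.lam0 Δ - l) f := hsub hf
    linarith
/-- Every element of the span of a nonempty set closed under addition and positive
scalar multiplication is a difference of two elements of the set. -/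
lemma span_eq_sub (C : Set A) (hne : C.Nonempty)
    (hadd : ∀ x ∈ C, ∀ y ∈ C, x + y ∈ C)
    (hsmul : ∀ c : ℝ, 0 < c → ∀ x ∈ C, c • x ∈ C) :
    ∀ w ∈ Submodule.span ℝ C, ∃ f ∈ C, ∃ g ∈ C, w = f - g := by
  obtain ⟨f₀, hf₀⟩ := hne
  intro w hw
  induction hw using Submodule.span_induction with
  | mem x hx => exact ⟨x + f₀, hadd x hx f₀ hf₀, f₀, hf₀, by abel⟩
  | zero => exact ⟨f₀, hf₀, f₀, hf₀, by abel⟩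
  | add x y _ _ ihx ihy =>
    obtain ⟨f, hf, g, hg, rfl⟩ := ihx
    obtain ⟨f', hf', g', hg', rfl⟩ := ihy
    exact ⟨f + f', hadd f hf f' hf', g + g', hadd g hg g' hg', by abel⟩
  | smul c x _ ih =>
    obtain ⟨f, hf, g, hg, rfl⟩ := ih
    rcases lt_trichotomy c 0 with hc | hc | hc
    · refine ⟨(-c) • g, hsmul _ (by linarith) g hg, (-c) • f, hsmul _ (by linarith) f hf, ?_⟩
      rw [smul_sub]; module
    · subst hc; exact ⟨f₀, hf₀, f₀, hf₀, by simp⟩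
    · exact ⟨c • f, hsmul c hc f hf, c • g, hsmul c hc g hg, by rw [smul_sub]⟩

/-- If `U₁ + F₁` and `U₂ + F₂` are disjoint subsets of `A`, then
`Γ_{F₁}(U₁)` and `Γ_{F₂}(U₂)` are disjoint subsets of `Ā`. -/
theorem gamma_disjoint (S : RootWeightSystem A) (F₁ F₂ : S.Faces) (U₁ U₂ : Set A)
    (hU₁ : IsOpen U₁) (hb₁ : IsBounded U₁) (hU₂ : IsOpen U₂) (hb₂ : IsBounded U₂)
    (hdisj : Disjoint (U₁ + F₁.val) (U₂ + F₂.val)) :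
    Disjoint (S.Gamma F₁ U₁) (S.Gamma F₂ U₂) := by
  rw [Set.disjoint_left]
  rintro p ⟨F₁', hc₁, u₁, hu₁, rfl⟩ ⟨F₂', hc₂, u₂, hu₂, hp⟩
  have hp' : Quot.mk S.AbarRel (F₁', u₁) = Quot.mk S.AbarRel (F₂', u₂) := hp
  obtain ⟨hF, hw⟩ :=
    ((abarRel_equivalence S).eqvGen_iff).mp (Quot.eqvGen_exact hp')
  -- hF : F₁' = F₂', hw : u₁ - u₂ ∈ span ℝ F₁'.val
  have hF' : F₁' = F₂' := hF
  subst hF'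
  have hw' : u₁ - u₂ ∈ Submodule.span ℝ F₁'.val := hw
  obtain ⟨Δ₁, Y₁, -, -, hface₁⟩ := F₁.2
  obtain ⟨Δ₂, Y₂, -, -, hface₂⟩ := F₂.2
  obtain ⟨Δ', Y', -, -, hface'⟩ := F₁'.2
  obtain ⟨x₁, hx₁, y₁, hy₁, rfl⟩ := hu₁
  obtain ⟨x₂, hx₂, y₂, hy₂, rfl⟩ := hu₂
  by_cases hne : F₁'.val.Nonempty
  · -- write u₁ - u₂ as a difference of two elements of the face F₁'
    obtain ⟨f, hf, g, hg, hfg⟩ :=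
      span_eq_sub F₁'.val hne
        (by rw [hface']; exact fun x hx y hy => face_add_mem S Δ' Y' hx hy)
        (by rw [hface']; exact fun c hc x hx => face_smul_mem S Δ' Y' hc hx)
        _ hw'
    have heq : (x₁ + y₁) + g = (x₂ + y₂) + f := by
      rw [sub_eq_sub_iff_add_eq_add] at hfg
      rw [hfg]; abel
    have hmem₁ : (x₁ + y₁) + g ∈ U₁ + F₁.val := by
      have hg₁ : g ∈ closure F₁.val := hc₁ hg
      have : y₁ + g ∈ F₁.val := by
        rw [hface₁] at hy₁ hg₁ ⊢
        exact face_add_closure_mem S Δ₁ Y₁ hy₁ hg₁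
      exact ⟨x₁, hx₁, y₁ + g, this, by abel⟩
    have hmem₂ : (x₂ + y₂) + f ∈ U₂ + F₂.val := by
      have hf₂ : f ∈ closure F₂.val := hc₂ hf
      have : y₂ + f ∈ F₂.val := by
        rw [hface₂] at hy₂ hf₂ ⊢
        exact face_add_closure_mem S Δ₂ Y₂ hy₂ hf₂
      exact ⟨x₂, hx₂, y₂ + f, this, by abel⟩
    exact Set.disjoint_left.mp hdisj hmem₁ (heq ▸ hmem₂)
  · have hempty : F₁'.val = ∅ := Set.not_nonempty_iff_eq_empty.mp hne
    rw [hempty, Submodule.span_empty, Submodule.mem_bot, sub_eq_zero] at hw'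
    have hmem₁ : x₁ + y₁ ∈ U₁ + F₁.val := ⟨x₁, hx₁, y₁, hy₁, rfl⟩
    have hmem₂ : x₂ + y₂ ∈ U₂ + F₂.val := ⟨x₂, hx₂, y₂, hy₂, rfl⟩
    have hw'' : x₁ + y₁ = x₂ + y₂ := hw'
    exact Set.disjoint_left.mp hdisj hmem₁ (hw'' ▸ hmem₂)
end
end
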